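/- Let T ∈ B(H) be a norm limit of complex symmetric operators, with conjugations C_n satisfying C_n T* C_n → T in norm. Suppose x is a shift-cyclic vector for T (the closed span of {T^k x, (T*)^k x : k ≥ 0} is all of H) and that the sequence (C_n x) converges in H. Then T is a complex symmetric operator. -/

import Mathlib

/-!
The conjugations `Cₙ` are isometries, so the vectors `z` for which `(Cₙ z)` converges form a
closed subspace. Since `Cₙ T* Cₙ → T` uniformly on bounded sets, `Cₙ z → w` forces
`Cₙ (T z) → T* w` and `Cₙ (T* z) → T w`; hence that subspace is invariant under `T` and `T*`,
contains `x`, and is therefore all of `H`. The pointwise limit `C` of the `Cₙ` is a conjugation,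
and passing to the limit in `Cₙ (T z) → T* (C z)` gives `C T = T* C`.
-/

open Filter Topology ContinuousLinearMap

def IsConjugation {H : Type*} [NormedAddCommGroup H] [InnerProductSpace ℂ H]
    (C : H → H) : Prop :=
  (∀ x y, C (x + y) = C x + C y) ∧
  (∀ (a : ℂ) (x : H), C (a • x) = (starRingEnd ℂ a) • C x) ∧
  (∀ x, ‖C x‖ = ‖x‖) ∧
  (∀ x, C (C x) = x)

def IsCSO {H : Type*} [NormedAddCommGroup H] [InnerProductSpace ℂ H]
    [CompleteSpace H] (T : H →L[ℂ] H) : Prop :=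
  ∃ C : H → H, IsConjugation C ∧ ∀ x, T x = C (adjoint T (C x))

/-- `x` is shift-cyclic for `T` if `span {T^k x, (T*)^k x : k ≥ 0}` is dense. -/
def ShiftCyclic {H : Type*} [NormedAddCommGroup H] [InnerProductSpace ℂ H]
    [CompleteSpace H] (T : H →L[ℂ] H) (x : H) : Prop :=
  Dense (Submodule.span ℂ
    ({y : H | ∃ k : ℕ, y = (T ^ k) x ∨ y = ((adjoint T) ^ k) x}) : Set H)

theorem Equicontinuous.isClosed_setOf_cauchySeq {ι X α : Type*} [Nonempty ι] [SemilatticeSup ι]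
    [TopologicalSpace X] [PseudoMetricSpace α] {F : ι → X → α} (hF : Equicontinuous F) :
    IsClosed {x | CauchySeq (F · x)} := by
  refine closure_subset_iff_isClosed.mp fun x hx => Metric.cauchySeq_iff.2 fun ε hε => ?_
  obtain ⟨y, hy, hxy⟩ : ∃ y, CauchySeq (F · y) ∧ ∀ i, dist (F i x) (F i y) < ε / 3 :=
    ((mem_closure_iff_frequently.1 hx).and_eventually
      (Metric.equicontinuousAt_iff_right.1 (hF x) _ (by positivity))).exists
  obtain ⟨N, hN⟩ := Metric.cauchySeq_iff.1 hy (ε / 3) (by positivity)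
  refine ⟨N, fun m hm n hn => ?_⟩
  calc dist (F m x) (F n x)
      ≤ dist (F m x) (F m y) + dist (F m y) (F n y) + dist (F n y) (F n x) :=
        dist_triangle4 _ _ _ _
    _ < ε / 3 + ε / 3 + ε / 3 := by
        gcongr
        · exact hxy m
        · exact hN m hm n hn
        · rw [dist_comm]; exact hxy n
    _ = ε := by ring

theorem tendsto_sub_apply_of_uniform {E F : Type*} [SeminormedAddCommGroup E]
    [SeminormedAddCommGroup F] {G : E → F} {Gs : ℕ → E → F}
    (hG : ∀ ε > (0 : ℝ), ∃ N, ∀ n ≥ N, ∀ y, ‖G y - Gs n y‖ ≤ ε * ‖y‖)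
    {y : ℕ → E} {M : ℝ} (hy : ∀ n, ‖y n‖ ≤ M) :
    Tendsto (fun n => G (y n) - Gs n (y n)) atTop (𝓝 0) := by
  have hM : 0 < M + 1 := by linarith [norm_nonneg (y 0), hy 0]
  refine NormedAddGroup.tendsto_nhds_zero.2 fun ε hε => ?_
  obtain ⟨N, hN⟩ := hG (ε / (M + 1)) (by positivity)
  filter_upwards [eventually_ge_atTop N] with n hn
  calc ‖G (y n) - Gs n (y n)‖ ≤ ε / (M + 1) * ‖y n‖ := hN n hn (y n)
    _ ≤ ε / (M + 1) * M := by gcongr; exact hy n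
    _ < ε / (M + 1) * (M + 1) := by gcongr; linarith
    _ = ε := div_mul_cancel₀ ε hM.ne'

section Conjugation

variable {H : Type*} [NormedAddCommGroup H] [InnerProductSpace ℂ H]

namespace IsConjugation

variable {C : H → H}

def toLinearIsometry (hC : IsConjugation C) : H →ₗᵢ⋆[ℂ] H where
  toFun := C
  map_add' := hC.1
  map_smul' := hC.2.1
  norm_map' := hC.2.2.1

theorem map_add (hC : IsConjugation C) (u v : H) : C (u + v) = C u + C v := hC.1 u v

theorem map_smul (hC : IsConjugation C) (a : ℂ) (u : H) : C (a • u) = (starRingEnd ℂ a) • C u :=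
  hC.2.1 a u

theorem norm_map (hC : IsConjugation C) (u : H) : ‖C u‖ = ‖u‖ := hC.2.2.1 u

theorem involutive (hC : IsConjugation C) (u : H) : C (C u) = u := hC.2.2.2 u

theorem map_zero (hC : IsConjugation C) : C 0 = 0 := hC.toLinearIsometry.map_zero

theorem map_sub (hC : IsConjugation C) (u v : H) : C (u - v) = C u - C v :=
  hC.toLinearIsometry.map_sub u v

theorem dist_map (hC : IsConjugation C) (u v : H) : dist (C u) (C v) = dist u v :=
  hC.toLinearIsometry.dist_map u v

end IsConjugation

theorem IsConjugation.of_tendsto {ι : Type*} {l : Filter ι} [l.NeBot] {Cs : ι → H → H}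
    {C : H → H} (hCs : ∀ i, IsConjugation (Cs i))
    (hlim : ∀ z, Tendsto (fun i => Cs i z) l (𝓝 (C z))) : IsConjugation C := by
  refine ⟨fun u v => ?_, fun a u => ?_, fun u => ?_, fun u => ?_⟩
  · refine tendsto_nhds_unique (hlim (u + v)) ?_
    simpa only [(hCs _).map_add] using (hlim u).add (hlim v)
  · refine tendsto_nhds_unique (hlim (a • u)) ?_
    simpa only [(hCs _).map_smul] using (hlim u).const_smul (starRingEnd ℂ a)
  · refine tendsto_nhds_unique (hlim u).norm ?_
    simpa only [(hCs _).norm_map] using tendsto_const_nhds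
  · refine tendsto_nhds_unique (hlim (C u)) (tendsto_iff_dist_tendsto_zero.2 ?_)
    have h := (hlim u).dist (tendsto_const_nhds (x := C u))
    rw [dist_self] at h
    refine h.congr fun i => ?_
    rw [← (hCs i).dist_map, (hCs i).involutive, dist_comm]

variable {Cseq : ℕ → H → H}

def convergentSubmodule (hC : ∀ n, IsConjugation (Cseq n)) : Submodule ℂ H where
  carrier := {z | ∃ w, Tendsto (fun n => Cseq n z) atTop (𝓝 w)}
  zero_mem' := ⟨0, by simpa only [(hC _).map_zero] using tendsto_const_nhds⟩
  add_mem' := by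
    rintro u v ⟨wu, hu⟩ ⟨wv, hv⟩
    exact ⟨wu + wv, by simpa only [(hC _).map_add] using hu.add hv⟩
  smul_mem' := by
    rintro a u ⟨w, hw⟩
    exact ⟨starRingEnd ℂ a • w, by simpa only [(hC _).map_smul] using hw.const_smul _⟩

theorem isClosed_convergentSubmodule [CompleteSpace H] (hC : ∀ n, IsConjugation (Cseq n)) :
    IsClosed (convergentSubmodule hC : Set H) := by
  have hequi : Equicontinuous Cseq :=
    Metric.equicontinuous_of_continuity_modulus id tendsto_id Cseq
      fun u v n => ((hC n).dist_map u v).le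
  convert hequi.isClosed_setOf_cauchySeq using 1
  ext z
  exact ⟨fun ⟨_, hw⟩ => hw.cauchySeq, cauchySeq_tendsto_of_complete⟩

end Conjugation

section ApproximatelySymmetric

variable {H : Type*} [NormedAddCommGroup H] [InnerProductSpace ℂ H] [CompleteSpace H]
  {T : H →L[ℂ] H} {Cseq : ℕ → H → H}

theorem tendsto_conj_apply_of_tendsto (hC : ∀ n, IsConjugation (Cseq n))
    (hconv : ∀ ε > (0:ℝ), ∃ N, ∀ n ≥ N, ∀ y : H,
      ‖T y - Cseq n (adjoint T (Cseq n y))‖ ≤ ε * ‖y‖)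
    {z w : H} (hz : Tendsto (fun n => Cseq n z) atTop (𝓝 w)) :
    Tendsto (fun n => Cseq n (T z)) atTop (𝓝 (adjoint T w)) := by
  have herr : Tendsto (fun n => Cseq n (T z - Cseq n (adjoint T (Cseq n z)))) atTop (𝓝 0) := by
    rw [tendsto_zero_iff_norm_tendsto_zero]
    simpa only [(hC _).norm_map] using tendsto_zero_iff_norm_tendsto_zero.1
      (tendsto_sub_apply_of_uniform hconv (y := fun _ => z) fun _ => le_rfl)
  simpa only [(hC _).map_sub, (hC _).involutive, sub_add_cancel, Function.comp_apply,
    zero_add] using herr.add ((adjoint T).continuous.tendsto w |>.comp hz)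

theorem tendsto_conj_adjoint_apply_of_tendsto (hC : ∀ n, IsConjugation (Cseq n))
    (hconv : ∀ ε > (0:ℝ), ∃ N, ∀ n ≥ N, ∀ y : H,
      ‖T y - Cseq n (adjoint T (Cseq n y))‖ ≤ ε * ‖y‖)
    {z w : H} (hz : Tendsto (fun n => Cseq n z) atTop (𝓝 w)) :
    Tendsto (fun n => Cseq n (adjoint T z)) atTop (𝓝 (T w)) := by
  -- the uniform estimate is needed here: it is applied at the moving points `Cₙ z`
  have herr := tendsto_sub_apply_of_uniform hconv (y := fun n => Cseq n z)
    fun n => ((hC n).norm_map z).le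
  simp only [(hC _).involutive] at herr
  simpa only [Function.comp_apply, sub_sub_cancel, sub_zero] using
    (T.continuous.tendsto w |>.comp hz).sub herr

end ApproximatelySymmetric

theorem ShiftCyclic.submodule_eq_top {H : Type*} [NormedAddCommGroup H] [InnerProductSpace ℂ H]
    [CompleteSpace H] {T : H →L[ℂ] H} {x : H} (hx : ShiftCyclic T x) {S : Submodule ℂ H}
    (hS : IsClosed (S : Set H)) (hxS : x ∈ S) (hT : ∀ z ∈ S, T z ∈ S)
    (hT' : ∀ z ∈ S, adjoint T z ∈ S) : S = ⊤ := by
  have hpow : ∀ (A : H →L[ℂ] H), (∀ z ∈ S, A z ∈ S) → ∀ k : ℕ, (A ^ k) x ∈ S := by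
    intro A hA k
    induction k with
    | zero => simpa using hxS
    | succ k ih => simpa only [pow_succ', mul_apply_eq_comp] using hA _ ih
  have hspan : Submodule.span ℂ {y : H | ∃ k : ℕ, y = (T ^ k) x ∨ y = ((adjoint T) ^ k) x} ≤ S :=
    Submodule.span_le.2 fun y ⟨k, hk⟩ => hk.elim (· ▸ hpow T hT k) (· ▸ hpow _ hT' k)
  rw [eq_top_iff, ← SetLike.coe_subset_coe, Submodule.top_coe, ← (hx.mono hspan).closure_eq,
    hS.closure_eq]

/-- If `Cₙ T* Cₙ → T` in operator norm, `x` is shift-cyclic for `T`, and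
`(Cₙ x)` converges, then `T` is complex symmetric. -/
theorem CSO_of_shiftCyclic_convergence {H : Type*} [NormedAddCommGroup H]
    [InnerProductSpace ℂ H] [CompleteSpace H]
    (T : H →L[ℂ] H) (Cseq : ℕ → H → H)
    (hC : ∀ n, IsConjugation (Cseq n))
    (hconv : ∀ ε > (0:ℝ), ∃ N, ∀ n ≥ N, ∀ y : H,
      ‖T y - Cseq n (adjoint T (Cseq n y))‖ ≤ ε * ‖y‖)
    (x : H) (hx : ShiftCyclic T x)
    (hCx : ∃ y : H, Tendsto (fun n => Cseq n x) atTop (𝓝 y)) :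
    IsCSO T := by
  have htop : convergentSubmodule hC = ⊤ :=
    hx.submodule_eq_top (isClosed_convergentSubmodule hC) hCx
      (fun _ ⟨_, hw⟩ => ⟨_, tendsto_conj_apply_of_tendsto hC hconv hw⟩)
      (fun _ ⟨_, hw⟩ => ⟨_, tendsto_conj_adjoint_apply_of_tendsto hC hconv hw⟩)
  have hall : ∀ z, ∃ w, Tendsto (fun n => Cseq n z) atTop (𝓝 w) :=
    fun _ => htop.ge Submodule.mem_top
  choose C hlim using hall
  have hCconj : IsConjugation C := .of_tendsto hC hlim
  refine ⟨C, hCconj, fun z => ?_⟩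
  have hCT : C (T z) = adjoint T (C z) :=
    tendsto_nhds_unique (hlim (T z)) (tendsto_conj_apply_of_tendsto hC hconv (hlim z))
  rw [← hCT, hCconj.involutive]
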